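/- For A ≥ 0 and B > 0, the function γ ↦ log(1+γ) - γ + (1+γ)*A/(A+B) is concave on γ ≥ 0, its unique stationary point is γ* = A/B, and its value there is log(1 + A/B); moreover for all γ ≥ 0 the function value is at most log(1 + A/B). -/

import Mathlib

/-!
Writing `s = 1 + A / B`, so that `A / (A + B) = 1 - 1 / s`, the objective becomes
`log (1 + γ) - (1 + γ) / s + 1 = log s + (log x - (x - 1))` with `x = (1 + γ) / s`.
Everything then follows from the concavity of `log` and from `log x ≤ x - 1`, with equality
exactly at `x = 1`, i.e. at `γ = s - 1 = A / B`.
-/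

open Real Set

/-- The dual-transform objective `γ ↦ log (1 + γ) - γ + (1 + γ) A / (A + B)`, with `s = 1 + A / B`. -/
noncomputable def dualObjective (s γ : ℝ) : ℝ := log (1 + γ) - (1 + γ) / s + 1

theorem concaveOn_log_one_add : ConcaveOn ℝ (Ioi (-1)) fun γ : ℝ => log (1 + γ) := by
  simpa [Function.comp_def] using strictConcaveOn_log_Ioi.concaveOn.translate_right 1

theorem concaveOn_dualObjective (s : ℝ) : ConcaveOn ℝ (Ioi (-1)) (dualObjective s) := by
  have hlin : ConvexOn ℝ (Ioi (-1)) fun γ : ℝ => s⁻¹ * γ :=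
    (LinearMap.mulLeft ℝ s⁻¹).convexOn (convex_Ioi _)
  have hsplit : dualObjective s = fun γ => log (1 + γ) - s⁻¹ * γ + (1 - s⁻¹) := by
    funext γ
    rw [dualObjective, div_eq_inv_mul]
    ring
  rw [hsplit]
  exact (concaveOn_log_one_add.sub hlin).add_const _

theorem hasDerivAt_dualObjective (s : ℝ) {γ : ℝ} (hγ : 1 + γ ≠ 0) :
    HasDerivAt (dualObjective s) ((1 + γ)⁻¹ - s⁻¹) γ := by
  have h1 : HasDerivAt (fun x : ℝ => 1 + x) 1 γ := (hasDerivAt_id γ).const_add 1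
  exact (((h1.log hγ).sub (h1.div_const s)).add_const 1).congr_deriv (by rw [one_div, one_div])

theorem deriv_dualObjective_eq_zero_iff (s : ℝ) {γ : ℝ} (hγ : 1 + γ ≠ 0) :
    deriv (dualObjective s) γ = 0 ↔ γ = s - 1 := by
  rw [(hasDerivAt_dualObjective s hγ).deriv, sub_eq_zero, inv_inj, eq_sub_iff_add_eq']

theorem dualObjective_sub_one {s : ℝ} (hs : s ≠ 0) : dualObjective s (s - 1) = log s := by
  simp [dualObjective, hs]

theorem dualObjective_le_log {s γ : ℝ} (hs : 0 < s) (hγ : -1 < γ) : dualObjective s γ ≤ log s := by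
  have hγ' : 0 < 1 + γ := by linarith
  have hlog := log_le_sub_one_of_pos (div_pos hγ' hs)
  rw [log_div hγ'.ne' hs.ne'] at hlog
  rw [dualObjective]
  linarith

theorem dual_transform_concave_stationary_max (A B : ℝ) (hA : 0 ≤ A) (hB : 0 < B) :
    ConcaveOn ℝ (Set.Ici 0)
        (fun γ : ℝ => Real.log (1 + γ) - γ + (1 + γ) * A / (A + B))
      ∧ deriv (fun γ : ℝ => Real.log (1 + γ) - γ + (1 + γ) * A / (A + B)) (A / B) = 0
      ∧ (∀ γ ∈ Set.Ici (0 : ℝ),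
          deriv (fun γ : ℝ => Real.log (1 + γ) - γ + (1 + γ) * A / (A + B)) γ = 0 →
          γ = A / B)
      ∧ Real.log (1 + A / B) - A / B + (1 + A / B) * A / (A + B) = Real.log (1 + A / B)
      ∧ ∀ γ : ℝ, 0 ≤ γ →
          Real.log (1 + γ) - γ + (1 + γ) * A / (A + B) ≤ Real.log (1 + A / B) := by
  have hs : 0 < 1 + A / B := by positivity
  have hform : (fun γ : ℝ => Real.log (1 + γ) - γ + (1 + γ) * A / (A + B))
      = dualObjective (1 + A / B) := by
    funext γ
    have hAB : A + B ≠ 0 := by positivity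
    rw [dualObjective]
    field_simp
    ring
  have hIci : Ici (0 : ℝ) ⊆ Ioi (-1) := Ici_subset_Ioi.mpr (by norm_num)
  rw [hform]
  refine ⟨(concaveOn_dualObjective _).subset hIci (convex_Ici 0), ?_, ?_, ?_, ?_⟩
  · exact (deriv_dualObjective_eq_zero_iff _ hs.ne').mpr (by ring)
  · intro γ hγ hderiv
    have hγs := (deriv_dualObjective_eq_zero_iff _ (by linarith [mem_Ici.mp hγ])).mp hderiv
    linarith
  · have hvalue := dualObjective_sub_one hs.ne'
    rw [add_sub_cancel_left] at hvalue
    exact (congrFun hform (A / B)).trans hvalue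
  · intro γ hγ
    exact (congrFun hform γ).trans_le (dualObjective_le_log hs (by linarith))
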